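/- arXiv:1102.1248 — 3 statements merged into one kernel-verified Lean document; each statement's English description precedes it below -/
import Mathlib

section
/- Assume the genericity conditions (i) and (ii) hold. Then every subset S of the characteristics 𝒞 that is Γ-connected (i.e., connected in the graph on ℤ^b × ℤ^d in which two distinct points x, y are joined by an edge whenever x − y ∈ Γ) has cardinality at most B = (d+1)(d+2)/2 + b(b+1); in particular |S| < 3(d² + b²). -/
open scoped BigOperators

namespace NLW

noncomputable def dotP {b : ℕ} (ω : Fin b → ℝ) (n : Fin b → ℤ) : ℝ := ∑ k, (n k : ℝ) * ω k

noncomputable def sqnorm {d : ℕ} (v : Fin d → ℤ) : ℝ := ∑ m, ((v m : ℝ))^2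

noncomputable def omega0 {b d : ℕ} (j : Fin b → Fin d → ℤ) : Fin b → ℝ :=
  fun k => Real.sqrt (sqnorm (j k) + 1)

abbrev Idx (b d : ℕ) := (Fin b → ℤ) × (Fin d → ℤ)

def Gamma {b d : ℕ} (p : ℕ) (j : Fin b → Fin d → ℤ) : Set (Idx b d) :=
  {x | ∃ P P' : Fin b → ℕ, (∑ k, (P k + P' k)) = p ∧
        x.1 = (fun k => (P' k : ℤ) - (P k : ℤ)) ∧
        x.2 = (fun m => ∑ k, ((P k : ℤ) - (P' k : ℤ)) * j k m)}

def Bprime (d : ℕ) : ℕ := (d+1)*(d+2)/2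

def Bconst (b d : ℕ) : ℕ := Bprime d + b*(b+1)

def AmbSet {b d : ℕ} (p : ℕ) (j : Fin b → Fin d → ℤ) : Set (Idx b d) :=
  {x | ∃ l : List (Idx b d), l.length ≤ Bconst b d ∧ (∀ y ∈ l, y ∈ Gamma p j) ∧ x = l.sum}

noncomputable def Wfun {b d : ℕ} (j : Fin b → Fin d → ℤ) (x : Idx b d) : ℝ :=
  (sqnorm x.2 - (dotP (omega0 j) x.1)^2)^2 - 4*(dotP (omega0 j) x.1)^2

abbrev LIdx (d : ℕ) := Fin d ⊕ ({q : Fin d × Fin d // q.1 < q.2} ⊕ Fin d)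

noncomputable def Lfun {b d : ℕ} (j : Fin b → Fin d → ℤ) (x : Idx b d) : LIdx d → ℝ :=
  fun i => match i with
  | Sum.inl m => 4*((x.2 m : ℝ))^2 - 4*(dotP (omega0 j) x.1)^2
  | Sum.inr (Sum.inl q) => 8*(x.2 q.1.1 : ℝ)*(x.2 q.1.2 : ℝ)
  | Sum.inr (Sum.inr m) => (4*sqnorm x.2 - 4*(dotP (omega0 j) x.1)^2) * (x.2 m : ℝ)

def unitE {b : ℕ} (k : Fin b) : Fin b → ℤ := fun i => if i = k then 1 else 0

def DegSet {b d : ℕ} (j : Fin b → Fin d → ℤ) : Set (Idx b d) :=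
  {x | ∃ α : ℤ, α ≠ 0 ∧
        ((∃ k k' : Fin b, k ≠ k' ∧
            x = α • ((unitE k' - unitE k, fun m => j k m - j k' m) : Idx b d)) ∨
         (∃ k : Fin b, x = α • ((-unitE k, fun m => j k m) : Idx b d)))}

def GenericI {b d : ℕ} (p : ℕ) (j : Fin b → Fin d → ℤ) : Prop :=
  ∀ x ∈ AmbSet p j, x ≠ 0 →
    sqnorm x.2 + (dotP (omega0 j) x.1)^2 ≠ 0 ∧
    sqnorm x.2 - (dotP (omega0 j) x.1)^2 ≠ 0 ∧
    Wfun j x ≠ 0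

def GenericII {b d : ℕ} (p : ℕ) (j : Fin b → Fin d → ℤ) : Prop :=
  ∀ E : Fin (Bprime d) → Idx b d,
    Function.Injective E →
    (∀ i, E i ∈ AmbSet p j ∧ E i ∉ DegSet j ∧ (E i).2 ≠ 0) →
    ∀ ρ : ℕ, 1 ≤ ρ → ρ ≤ Bprime d - 1 →
    ∀ r : Fin (ρ+1) → Fin (Bprime d), Function.Injective r →
    ∀ c : Fin ρ → LIdx d, Function.Injective c →
    (∀ i0 : Fin (ρ+1),
      Matrix.det (Matrix.of fun u v : Fin ρ => Lfun j (E (r (i0.succAbove u))) (c v)) ≠ 0) →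
    Matrix.det (Matrix.of fun u v : Fin (ρ+1) =>
      if h : (v : ℕ) < ρ then Lfun j (E (r u)) (c ⟨v, h⟩) else Wfun j (E (r u))) ≠ 0

def Chars {b d : ℕ} (j : Fin b → Fin d → ℤ) : Set (Idx b d) :=
  {x | dotP (omega0 j) x.1 + Real.sqrt (sqnorm x.2 + 1) = 0 ∨
       -(dotP (omega0 j) x.1) + Real.sqrt (sqnorm x.2 + 1) = 0}

def SpSet {b d : ℕ} (j : Fin b → Fin d → ℤ) : Set (Idx b d) :=
  {x | ∃ k : Fin b, x = (-unitE k, fun m => j k m) ∨ x = (unitE k, fun m => -(j k m))}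

def GenericIII {b d : ℕ} (p : ℕ) (j : Fin b → Fin d → ℤ) : Prop :=
  ∀ l : List (Idx b d), l.length = p + 1 → (∀ y ∈ l, y ∈ SpSet j) →
    l.sum ∈ Chars j → l.sum ∈ SpSet j

end NLW

/-!
If a Γ-connected `S ⊆ 𝒞` had more than `B` points, growing a spanning tree from one of them,
`x₀`, would give `B + 1` points of `S` whose pairwise differences all lie in `𝒜`. For every
other such point `x`, subtracting and squaring the characteristic equations of `x` and `x₀`
gives `L(x - x₀) · V(x₀) + W(x - x₀) = 0`, where `V(x₀)` lists the monomials of degree at most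
two in the coordinates of `x₀.2`. By condition (i) at most one of the points has `Δj = 0`, and
each of the `b²` lines through `x₀` spanned by `𝒢` contains at most one of them. The remaining
`B'` points give `B'` rows `(L, W)` with the common kernel vector `(V, 1)`, so the column `W`
lies in the span of the columns of `L`; removing singular minors one at a time then produces
a vanishing bordered determinant, which condition (ii) excludes.
-/

theorem Finset.sq_sum_eq_sum_sq_add_two_mul_sum_lt {ι R : Type*} [Fintype ι] [LinearOrder ι]
    [CommRing R] (a : ι → R) :
    (∑ i, a i) ^ 2 = ∑ i, a i ^ 2 + 2 * ∑ q : {q : ι × ι // q.1 < q.2}, a q.1.1 * a q.1.2 := by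
  have trichotomy : ∀ i i', a i * a i' = (if i < i' then a i * a i' else 0)
      + (if i' < i then a i' * a i else 0) + (if i = i' then a i ^ 2 else 0) := by
    intro i i'
    rcases lt_trichotomy i i' with h | rfl | h
    · simp [h, h.not_gt, h.ne]
    · simp [sq]
    · simp [h, h.not_gt, h.ne', mul_comm]
  have sum_lt : ∑ q : {q : ι × ι // q.1 < q.2}, a q.1.1 * a q.1.2
      = ∑ i, ∑ i', if i < i' then a i * a i' else 0 := by
    rw [← Finset.sum_subtype (Finset.univ.filter fun q : ι × ι => q.1 < q.2) (by simp)
      (fun q => a q.1 * a q.2), Finset.sum_filter, ← Finset.univ_product_univ, Finset.sum_product]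
  rw [sq, Finset.sum_mul_sum, sum_lt,
    Finset.sum_congr rfl fun i _ => Finset.sum_congr rfl fun i' _ => trichotomy i i']
  simp only [Finset.sum_add_distrib, Finset.sum_ite_eq, Finset.mem_univ, if_true]
  rw [Finset.sum_comm (f := fun i i' => if i' < i then a i' * a i else 0)]
  ring

theorem Relation.ReflTransGen.exists_mem_notMem {α : Type*} {r : α → α → Prop} {a z : α}
    {s : Set α} (h : Relation.ReflTransGen r a z) (ha : a ∈ s) (hz : z ∉ s) :
    ∃ u ∈ s, ∃ v ∉ s, r u v := by
  induction h with
  | refl => exact absurd ha hz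
  | @tail y z _ hyz ih =>
    by_cases hy : y ∈ s
    · exact ⟨y, hy, z, hz, hyz⟩
    · exact ih hy

namespace Matrix

variable {ι κ 𝕜 : Type*} [Field 𝕜]

def appendCol {ρ : ℕ} (A : Matrix (Fin (ρ + 1)) (Fin ρ) 𝕜) (w : Fin (ρ + 1) → 𝕜) :
    Matrix (Fin (ρ + 1)) (Fin (ρ + 1)) 𝕜 :=
  Matrix.of fun u v => if h : (v : ℕ) < ρ then A u ⟨v, h⟩ else w u

theorem det_appendCol_eq_zero {ρ : ℕ} {A : Matrix (Fin (ρ + 1)) (Fin ρ) 𝕜}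
    {w : Fin (ρ + 1) → 𝕜} {β : Fin ρ → 𝕜} (hw : w = A *ᵥ β) : (appendCol A w).det = 0 := by
  rw [← exists_mulVec_eq_zero_iff]
  refine ⟨Fin.lastCases (-1) β, fun h => by simpa using congrFun h (Fin.last ρ), ?_⟩
  funext u
  simp [appendCol, Matrix.mulVec, dotProduct, Fin.sum_univ_castSucc, hw]

theorem mulVec_eq_submatrix_succAbove_mulVec {m : ℕ} (A : Matrix ι (Fin (m + 1)) 𝕜)
    {x : Fin (m + 1) → 𝕜} {v : Fin (m + 1)} (hx : x v = 0) :
    A *ᵥ x = A.submatrix id v.succAbove *ᵥ (x ∘ v.succAbove) := by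
  funext u
  simp [Matrix.mulVec, dotProduct, Fin.sum_univ_succAbove _ v, hx]

theorem exists_mulVec_eq_submatrix_succAbove_mulVec {m : ℕ} {A : Matrix ι (Fin (m + 1)) 𝕜}
    {γ : Fin (m + 1) → 𝕜} (hγ : γ ≠ 0) (hAγ : A *ᵥ γ = 0) (β : Fin (m + 1) → 𝕜) :
    ∃ (v : Fin (m + 1)) (β' : Fin m → 𝕜), A *ᵥ β = A.submatrix id v.succAbove *ᵥ β' := by
  obtain ⟨v, hv⟩ : ∃ v, γ v ≠ 0 := Function.ne_iff.mp hγ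
  refine ⟨v, (β - (β v / γ v) • γ) ∘ v.succAbove, ?_⟩
  rw [← mulVec_eq_submatrix_succAbove_mulVec A (by simp [div_mul_cancel₀ _ hv]),
    Matrix.mulVec_sub, Matrix.mulVec_smul, hAγ, smul_zero, sub_zero]

/-- Descent on `ρ`: when a `ρ × ρ` minor vanishes, a kernel vector of it lets one drop a row and a
column while keeping `w` in the span of the remaining columns; `ρ = 0` is impossible as `w ≠ 0`. -/
theorem exists_appendCol_det_eq_zero (L : Matrix ι κ 𝕜) (w : ι → 𝕜) (hw : ∀ i, w i ≠ 0) :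
    ∀ {ρ : ℕ} (r : Fin (ρ + 1) → ι) (c : Fin ρ → κ) (β : Fin ρ → 𝕜),
      Function.Injective r → Function.Injective c → w ∘ r = L.submatrix r c *ᵥ β →
      ∃ ρ' ≤ ρ, 1 ≤ ρ' ∧ ∃ (r' : Fin (ρ' + 1) → ι) (c' : Fin ρ' → κ),
        Function.Injective r' ∧ Function.Injective c' ∧
        (∀ i₀ : Fin (ρ' + 1), (L.submatrix (r' ∘ i₀.succAbove) c').det ≠ 0) ∧
        (appendCol (L.submatrix r' c') (w ∘ r')).det = 0
  | 0, r, _, _, _, _, hβ => absurd (by simpa using congrFun hβ 0) (hw (r 0))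
  | m + 1, r, c, β, hr, hc, hβ => by
    by_cases hminors : ∀ i₀ : Fin (m + 2), (L.submatrix (r ∘ i₀.succAbove) c).det ≠ 0
    · exact ⟨m + 1, le_rfl, by omega, r, c, hr, hc, hminors, det_appendCol_eq_zero hβ⟩
    push Not at hminors
    obtain ⟨i₀, hsingular⟩ := hminors
    obtain ⟨γ, hγ, hkernel⟩ := exists_mulVec_eq_zero_iff.mpr hsingular
    obtain ⟨v, β', hβ'⟩ := exists_mulVec_eq_submatrix_succAbove_mulVec hγ hkernel β
    have hrestrict :
        w ∘ (r ∘ i₀.succAbove) = L.submatrix (r ∘ i₀.succAbove) (c ∘ v.succAbove) *ᵥ β' := by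
      rw [← Function.comp_assoc, hβ]
      exact hβ'
    obtain ⟨ρ', hρ', hρ'_pos, rest⟩ := exists_appendCol_det_eq_zero L w hw _ _ β'
      (hr.comp Fin.succAbove_right_injective) (hc.comp Fin.succAbove_right_injective) hrestrict
    exact ⟨ρ', hρ'.trans m.le_succ, hρ'_pos, rest⟩

end Matrix

section SumsOfAtMost

variable {G : Type*}

def sumsOfAtMost [AddMonoid G] (Γ : Set G) (n : ℕ) : Set G :=
  {x | ∃ l : List G, l.length ≤ n ∧ (∀ y ∈ l, y ∈ Γ) ∧ x = l.sum}

variable {Γ : Set G}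

theorem zero_mem_sumsOfAtMost [AddMonoid G] (n : ℕ) : (0 : G) ∈ sumsOfAtMost Γ n :=
  ⟨[], by simp, by simp, by simp⟩

theorem add_mem_sumsOfAtMost [AddMonoid G] {x y : G} {m n : ℕ} (hx : x ∈ sumsOfAtMost Γ m)
    (hy : y ∈ sumsOfAtMost Γ n) : x + y ∈ sumsOfAtMost Γ (m + n) := by
  obtain ⟨l, hl, hlΓ, rfl⟩ := hx
  obtain ⟨l', hl', hl'Γ, rfl⟩ := hy
  refine ⟨l ++ l', by simp; omega, fun z hz => ?_, by simp⟩
  rcases List.mem_append.mp hz with hz | hz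
  exacts [hlΓ z hz, hl'Γ z hz]

theorem mem_sumsOfAtMost_one [AddMonoid G] {x : G} (hx : x ∈ Γ) : x ∈ sumsOfAtMost Γ 1 :=
  ⟨[x], by simp, by simpa using hx, by simp⟩

theorem sumsOfAtMost_mono [AddMonoid G] {m n : ℕ} (h : m ≤ n) :
    sumsOfAtMost Γ m ⊆ sumsOfAtMost Γ n :=
  fun _ ⟨l, hl, hlΓ, hx⟩ => ⟨l, hl.trans h, hlΓ, hx⟩

variable [AddCommGroup G]

theorem sub_mem_sumsOfAtMost_insert [DecidableEq G] (hΓ : ∀ x ∈ Γ, -x ∈ Γ) {T : Finset G}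
    {n : ℕ} (hT : ∀ x ∈ T, ∀ y ∈ T, x - y ∈ sumsOfAtMost Γ n) {u v : G} (hu : u ∈ T)
    (huv : u - v ∈ Γ) : ∀ x ∈ insert v T, ∀ y ∈ insert v T, x - y ∈ sumsOfAtMost Γ (n + 1) := by
  have hvu : v - u ∈ sumsOfAtMost Γ 1 := mem_sumsOfAtMost_one (by simpa using hΓ _ huv)
  intro x hx y hy
  rcases Finset.mem_insert.mp hx with rfl | hxT <;> rcases Finset.mem_insert.mp hy with rfl | hyT
  · simpa using zero_mem_sumsOfAtMost (n + 1)
  · simpa [add_comm 1] using add_mem_sumsOfAtMost hvu (hT u hu y hyT)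
  · simpa using add_mem_sumsOfAtMost (hT x hxT u hu) (mem_sumsOfAtMost_one huv)
  · exact sumsOfAtMost_mono n.le_succ (hT x hxT y hyT)

theorem exists_finset_sub_mem_sumsOfAtMost (hΓ : ∀ x ∈ Γ, -x ∈ Γ) {S : Set G}
    {R : G → G → Prop} (hR : ∀ u v, R u v → v ∈ S ∧ u - v ∈ Γ) {x₀ : G} (hx₀ : x₀ ∈ S)
    (hconn : ∀ y ∈ S, Relation.ReflTransGen R x₀ y) :
    ∀ n : ℕ, (n + 1 : ℕ∞) ≤ S.encard → ∃ T : Finset G, ↑T ⊆ S ∧ x₀ ∈ T ∧ T.card = n + 1 ∧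
      ∀ x ∈ T, ∀ y ∈ T, x - y ∈ sumsOfAtMost Γ n := by
  classical
  intro n
  induction n with
  | zero =>
    intro _
    refine ⟨{x₀}, by simpa using hx₀, by simp, by simp, ?_⟩
    simpa using zero_mem_sumsOfAtMost 0
  | succ n ih =>
    intro hcard
    obtain ⟨T, hTS, hx₀T, hTcard, hT⟩ := ih (le_trans (by gcongr; simp) hcard)
    obtain ⟨y, hyS, hyT⟩ : ∃ y ∈ S, y ∉ T := by
      by_contra! hST
      have := (Set.encard_le_encard hST).trans_eq (Set.encard_coe_eq_coe_finsetCard T)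
      rw [hTcard] at this
      have := hcard.trans this
      norm_cast at this
      omega
    obtain ⟨u, hu, v, hv, huv⟩ := (hconn y hyS).exists_mem_notMem (s := ↑T) hx₀T hyT
    obtain ⟨hvS, huvΓ⟩ := hR u v huv
    refine ⟨insert v T, ?_, Finset.mem_insert_of_mem hx₀T, ?_,
      sub_mem_sumsOfAtMost_insert hΓ hT hu huvΓ⟩
    · simpa [Set.insert_subset_iff] using ⟨hvS, hTS⟩
    · rw [Finset.card_insert_of_notMem hv, hTcard]

end SumsOfAtMost

namespace NLW

variable {b d : ℕ}

theorem dotP_add (ω : Fin b → ℝ) (u v : Fin b → ℤ) : dotP ω (u + v) = dotP ω u + dotP ω v := by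
  simp [dotP, add_mul, Finset.sum_add_distrib]

theorem dotP_zsmul (ω : Fin b → ℝ) (α : ℤ) (u : Fin b → ℤ) : dotP ω (α • u) = α * dotP ω u := by
  simp [dotP, Finset.mul_sum, mul_assoc]

theorem sqnorm_nonneg (v : Fin d → ℤ) : 0 ≤ sqnorm v :=
  Finset.sum_nonneg fun _ _ => sq_nonneg _

@[simp]
theorem sqnorm_zero : sqnorm (0 : Fin d → ℤ) = 0 := by
  simp [sqnorm]

theorem sqnorm_add (u v : Fin d → ℤ) :
    sqnorm (u + v) = sqnorm u + 2 * ∑ m, (u m : ℝ) * v m + sqnorm v := by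
  simp only [sqnorm, Pi.add_apply, Int.cast_add, Finset.mul_sum, ← Finset.sum_add_distrib]
  exact Finset.sum_congr rfl fun _ _ => by ring

theorem sqnorm_zsmul (α : ℤ) (v : Fin d → ℤ) : sqnorm (α • v) = α ^ 2 * sqnorm v := by
  simp [sqnorm, Finset.mul_sum, mul_pow]

variable {j : Fin b → Fin d → ℤ}

theorem sq_dotP_of_mem_Chars {x : Idx b d} (hx : x ∈ Chars j) :
    dotP (omega0 j) x.1 ^ 2 = sqnorm x.2 + 1 := by
  have hsq := Real.sq_sqrt (by linarith [sqnorm_nonneg x.2] : 0 ≤ sqnorm x.2 + 1)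
  rcases hx with hx | hx
  · rw [← hsq, show dotP (omega0 j) x.1 = -√(sqnorm x.2 + 1) by linarith, neg_sq]
  · rw [← hsq, show dotP (omega0 j) x.1 = √(sqnorm x.2 + 1) by linarith]

theorem sqnorm_sub_sq_dotP_of_mem_Chars {x₀ Δ : Idx b d} (hx₀ : x₀ ∈ Chars j)
    (hx : x₀ + Δ ∈ Chars j) :
    sqnorm Δ.2 - dotP (omega0 j) Δ.1 ^ 2
      = 2 * (dotP (omega0 j) x₀.1 * dotP (omega0 j) Δ.1 - ∑ m, (x₀.2 m : ℝ) * Δ.2 m) := by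
  have h := sq_dotP_of_mem_Chars hx
  rw [Prod.fst_add, Prod.snd_add, dotP_add, sqnorm_add] at h
  linear_combination sq_dotP_of_mem_Chars hx₀ - h

noncomputable def quadMonomials (v : Fin d → ℤ) : LIdx d → ℝ
  | Sum.inl m => (v m : ℝ) ^ 2
  | Sum.inr (Sum.inl q) => (v q.1.1 : ℝ) * v q.1.2
  | Sum.inr (Sum.inr m) => v m

/-- Squaring `sqnorm_sub_sq_dotP_of_mem_Chars` leaves `x₀.1` only through
`(x₀.1 · ω⁰)² = |x₀.2|² + 1`, so the relation becomes linear in the monomials of `x₀.2` of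
degree at most two, with coefficients `L` and constant term `W`. -/
theorem Lfun_dotProduct_quadMonomials_add_Wfun {x₀ Δ : Idx b d} (hx₀ : x₀ ∈ Chars j)
    (hx : x₀ + Δ ∈ Chars j) : Lfun j Δ ⬝ᵥ quadMonomials x₀.2 + Wfun j Δ = 0 := by
  set D := dotP (omega0 j) Δ.1
  set J := ∑ m, (x₀.2 m : ℝ) * Δ.2 m
  have hsq := Finset.sq_sum_eq_sum_sq_add_two_mul_sum_lt fun m => (x₀.2 m : ℝ) * Δ.2 m
  have hdiag : ∑ m, Lfun j Δ (Sum.inl m) * quadMonomials x₀.2 (Sum.inl m)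
      = 4 * ∑ m, ((x₀.2 m : ℝ) * Δ.2 m) ^ 2 - 4 * D ^ 2 * sqnorm x₀.2 := by
    simp only [Lfun, quadMonomials, sqnorm, Finset.mul_sum, ← Finset.sum_sub_distrib]
    exact Finset.sum_congr rfl fun _ _ => by ring
  have hoff : ∑ q, Lfun j Δ (Sum.inr (Sum.inl q)) * quadMonomials x₀.2 (Sum.inr (Sum.inl q))
      = 8 * ∑ q : {q : Fin d × Fin d // q.1 < q.2},
        ((x₀.2 q.1.1 : ℝ) * Δ.2 q.1.1) * ((x₀.2 q.1.2 : ℝ) * Δ.2 q.1.2) := by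
    simp only [Lfun, quadMonomials, Finset.mul_sum]
    exact Finset.sum_congr rfl fun _ _ => by ring
  have hlin : ∑ m, Lfun j Δ (Sum.inr (Sum.inr m)) * quadMonomials x₀.2 (Sum.inr (Sum.inr m))
      = 4 * (sqnorm Δ.2 - D ^ 2) * J := by
    simp only [Lfun, quadMonomials, J, Finset.mul_sum]
    exact Finset.sum_congr rfl fun _ _ => by ring
  rw [dotProduct, Fintype.sum_sum_type, Fintype.sum_sum_type, hdiag, hoff, hlin, Wfun]
  have hdiff := sqnorm_sub_sq_dotP_of_mem_Chars hx₀ hx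
  linear_combination (sqnorm Δ.2 - D ^ 2 + 2 * (dotP (omega0 j) x₀.1 * D - J) + 4 * J) * hdiff
    + 4 * D ^ 2 * sq_dotP_of_mem_Chars hx₀ - 4 * hsq

variable {p : ℕ}

/-- The characteristic equation restricted to the line `x₀ + α g` is quadratic in `α` with the
root `α = 0`, so the line meets `𝒞` in at most one further point. -/
theorem eq_of_add_zsmul_mem_Chars {x₀ g : Idx b d} {α α' : ℤ} (hx₀ : x₀ ∈ Chars j)
    (hα : α ≠ 0) (hα' : α' ≠ 0) (hx : x₀ + α • g ∈ Chars j) (hx' : x₀ + α' • g ∈ Chars j)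
    (hg : sqnorm g.2 - dotP (omega0 j) g.1 ^ 2 ≠ 0) : α = α' := by
  have root : ∀ β : ℤ, β ≠ 0 → x₀ + β • g ∈ Chars j →
      β * (sqnorm g.2 - dotP (omega0 j) g.1 ^ 2)
        = 2 * (dotP (omega0 j) x₀.1 * dotP (omega0 j) g.1 - ∑ m, (x₀.2 m : ℝ) * g.2 m) := by
    intro β hβ hxβ
    have h := sqnorm_sub_sq_dotP_of_mem_Chars hx₀ hxβ
    have hcross : ∑ m, (x₀.2 m : ℝ) * ((β • g).2 m : ℝ) = β * ∑ m, (x₀.2 m : ℝ) * g.2 m := by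
      simp only [Prod.smul_snd, Pi.smul_apply, smul_eq_mul, Int.cast_mul, Finset.mul_sum]
      exact Finset.sum_congr rfl fun _ _ => by ring
    rw [Prod.smul_fst, Prod.smul_snd, sqnorm_zsmul, dotP_zsmul, ← Prod.smul_snd, hcross] at h
    apply mul_left_cancel₀ (Int.cast_ne_zero.mpr hβ : (β : ℝ) ≠ 0)
    linear_combination h
  exact_mod_cast mul_right_cancel₀ hg ((root α hα hx).trans (root α' hα' hx').symm)

theorem dotP_eq_neg_two_mul_of_snd_eq_zero {x₀ Δ : Idx b d} (hx₀ : x₀ ∈ Chars j)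
    (hx : x₀ + Δ ∈ Chars j) (h2 : Δ.2 = 0) (hD : dotP (omega0 j) Δ.1 ≠ 0) :
    dotP (omega0 j) Δ.1 = -2 * dotP (omega0 j) x₀.1 := by
  have h := sqnorm_sub_sq_dotP_of_mem_Chars hx₀ hx
  simp only [h2, sqnorm_zero, Pi.zero_apply, Int.cast_zero, mul_zero, Finset.sum_const_zero] at h
  apply mul_left_cancel₀ hD
  linear_combination -h

def degDir (j : Fin b → Fin d → ℤ) (q : Fin b × Fin b) : Idx b d :=
  if q.1 = q.2 then (-unitE q.1, fun m => j q.1 m)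
  else (unitE q.2 - unitE q.1, fun m => j q.1 m - j q.2 m)

theorem exists_eq_zsmul_degDir_of_mem_DegSet {x : Idx b d} (hx : x ∈ DegSet j) :
    ∃ q : Fin b × Fin b, ∃ α : ℤ, α ≠ 0 ∧ x = α • degDir j q := by
  obtain ⟨α, hα, ⟨k, k', hkk', rfl⟩ | ⟨k, rfl⟩⟩ := hx
  · exact ⟨(k, k'), α, hα, by rw [degDir, if_neg hkk']⟩
  · exact ⟨(k, k), α, hα, by rw [degDir, if_pos rfl]⟩

section

variable {T : Finset (Idx b d)} {x₀ : Idx b d}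

theorem subsingleton_snd_sub_eq_zero (hI : GenericI p j) (hT : ↑T ⊆ Chars j)
    (hdiff : ∀ x ∈ T, ∀ y ∈ T, x - y ∈ AmbSet p j) (hx₀ : x₀ ∈ T) :
    {x | x ∈ T.erase x₀ ∧ (x - x₀).2 = 0}.Subsingleton := by
  have hdot : ∀ x ∈ T.erase x₀, (x - x₀).2 = 0 →
      dotP (omega0 j) (x - x₀).1 = -2 * dotP (omega0 j) x₀.1 := by
    intro x hx h2
    obtain ⟨hne, hxT⟩ := Finset.mem_erase.mp hx
    refine dotP_eq_neg_two_mul_of_snd_eq_zero (hT hx₀) (by simpa using hT hxT) h2 fun hD => ?_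
    apply (hI _ (hdiff x hxT x₀ hx₀) (sub_ne_zero.mpr hne)).1
    rw [h2, hD, sqnorm_zero]
    ring
  rintro x ⟨hx, hx2⟩ x' ⟨hx', hx'2⟩
  by_contra hne
  have hsplit : x - x₀ = (x - x') + (x' - x₀) := (sub_add_sub_cancel x x' x₀).symm
  have h2 : (x - x').2 = 0 := by
    rw [← sub_sub_sub_cancel_right x x' x₀, Prod.snd_sub, hx2, hx'2, sub_zero]
  have h1 : dotP (omega0 j) (x - x').1 = 0 := by
    have := congrArg (dotP (omega0 j) ·.1) hsplit
    simp only [Prod.fst_add, dotP_add, hdot x hx hx2, hdot x' hx' hx'2] at this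
    linarith
  apply (hI _ (hdiff x (Finset.mem_of_mem_erase hx) x' (Finset.mem_of_mem_erase hx'))
    (sub_ne_zero.mpr hne)).1
  rw [h2, h1, sqnorm_zero]
  ring

theorem subsingleton_sub_eq_zsmul (hI : GenericI p j) (hT : ↑T ⊆ Chars j)
    (hdiff : ∀ x ∈ T, ∀ y ∈ T, x - y ∈ AmbSet p j) (hx₀ : x₀ ∈ T) (g : Idx b d) :
    {x | x ∈ T.erase x₀ ∧ ∃ α : ℤ, α ≠ 0 ∧ x - x₀ = α • g}.Subsingleton := by
  rintro x ⟨hx, α, hα, hxg⟩ x' ⟨hx', α', hα', hx'g⟩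
  obtain ⟨hne, hxT⟩ := Finset.mem_erase.mp hx
  have hg : sqnorm g.2 - dotP (omega0 j) g.1 ^ 2 ≠ 0 := by
    have h := (hI _ (hdiff x hxT x₀ hx₀) (sub_ne_zero.mpr hne)).2.1
    rw [hxg, Prod.smul_fst, Prod.smul_snd, sqnorm_zsmul, dotP_zsmul] at h
    exact fun hg => h (by linear_combination (α : ℝ) ^ 2 * hg)
  have hmem : ∀ y ∈ T, x₀ + (y - x₀) ∈ Chars j := fun y hy => by simpa using hT hy
  have := eq_of_add_zsmul_mem_Chars (hT hx₀) hα hα' (hxg ▸ hmem x hxT)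
    (hx'g ▸ hmem x' (Finset.mem_of_mem_erase hx')) hg
  exact sub_left_inj.mp (by rw [hxg, hx'g, this])

open Classical in
theorem card_degenerate_le (hI : GenericI p j) (hT : ↑T ⊆ Chars j)
    (hdiff : ∀ x ∈ T, ∀ y ∈ T, x - y ∈ AmbSet p j) (hx₀ : x₀ ∈ T) :
    ((T.erase x₀).filter fun x => x - x₀ ∈ DegSet j ∨ (x - x₀).2 = 0).card ≤ b * b + 1 := by
  calc _ ≤ (Finset.univ : Finset (Option (Fin b × Fin b))).card := by
        refine Finset.card_le_card_of_forall_subsingleton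
          (fun x (o : Option (Fin b × Fin b)) =>
            o.elim ((x - x₀).2 = 0) fun q => ∃ α : ℤ, α ≠ 0 ∧ x - x₀ = α • degDir j q)
          (fun x hx => ?_) ?_
        · rcases (Finset.mem_filter.mp hx).2 with hdeg | h2
          · obtain ⟨q, α, hα, h⟩ := exists_eq_zsmul_degDir_of_mem_DegSet hdeg
            exact ⟨some q, Finset.mem_univ _, α, hα, h⟩
          · exact ⟨none, Finset.mem_univ _, h2⟩
        rintro (_ | q) -
        · exact (subsingleton_snd_sub_eq_zero hI hT hdiff hx₀).anti
            fun x hx => ⟨(Finset.mem_filter.mp hx.1).1, hx.2⟩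
        · exact (subsingleton_sub_eq_zsmul hI hT hdiff hx₀ (degDir j q)).anti
            fun x hx => ⟨(Finset.mem_filter.mp hx.1).1, hx.2⟩
    _ = b * b + 1 := by simp

theorem card_LIdx_add_one (d : ℕ) : Fintype.card (LIdx d) + 1 = Bprime d := by
  have h : (d + 2).choose 2 = Bprime d := by
    rw [Nat.choose_two_right, Bprime, mul_comm]; rfl
  rw [← h, Nat.choose_succ_succ (d + 1) 1, Nat.choose_succ_succ d 1]
  simp [Fintype.card_subtype, Fintype.card_product_filter_lt]
  ring

open Matrix in
theorem GenericII.exists_Lfun_dotProduct_add_Wfun_ne_zero (hII : GenericII p j)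
    (E : Fin (Bprime d) → Idx b d) (hE : Function.Injective E)
    (hEmem : ∀ i, E i ∈ AmbSet p j ∧ E i ∉ DegSet j ∧ (E i).2 ≠ 0)
    (hW : ∀ i, Wfun j (E i) ≠ 0) (V : LIdx d → ℝ) :
    ∃ i, Lfun j (E i) ⬝ᵥ V + Wfun j (E i) ≠ 0 := by
  by_contra! hV
  have hcard := card_LIdx_add_one d
  let c := (Fintype.equivFin (LIdx d)).symm
  let L : Matrix (Fin (Bprime d)) (LIdx d) ℝ := Matrix.of fun i => Lfun j (E i)
  have hcomb : (fun i => Wfun j (E i)) ∘ Fin.cast hcard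
      = L.submatrix (Fin.cast hcard) c *ᵥ (-V ∘ c) := by
    funext u
    rw [Function.comp_apply, eq_neg_of_add_eq_zero_right (hV _), dotProduct,
      ← c.sum_comp]
    simp [Matrix.mulVec, dotProduct, L]
  obtain ⟨ρ, hρ, hρ_pos, r, c', hr, hc', hminors, hdet⟩ :=
    exists_appendCol_det_eq_zero L _ hW (Fin.cast hcard) c (-V ∘ c)
      (Fin.cast_injective hcard) c.injective hcomb
  exact hII E hE hEmem ρ hρ_pos (by omega) r hr c' hc' hminors hdet

open Classical in
theorem card_nondegenerate_lt (hI : GenericI p j) (hII : GenericII p j) (hT : ↑T ⊆ Chars j)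
    (hdiff : ∀ x ∈ T, ∀ y ∈ T, x - y ∈ AmbSet p j) (hx₀ : x₀ ∈ T) :
    ((T.erase x₀).filter fun x => ¬(x - x₀ ∈ DegSet j ∨ (x - x₀).2 = 0)).card < Bprime d := by
  by_contra! hcard
  obtain ⟨F, hF, hFcard⟩ := Finset.exists_subset_card_eq hcard
  let e := (F.equivFinOfCardEq hFcard).symm
  have hmem : ∀ i, (e i : Idx b d) ∈ T ∧ (e i : Idx b d) ≠ x₀ ∧
      (e i : Idx b d) - x₀ ∉ DegSet j ∧ ((e i : Idx b d) - x₀).2 ≠ 0 := fun i => by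
    obtain ⟨hx, hnondeg⟩ := Finset.mem_filter.mp (hF (e i).2)
    exact ⟨Finset.mem_of_mem_erase hx, Finset.ne_of_mem_erase hx, hnondeg⟩
  obtain ⟨i, hi⟩ := hII.exists_Lfun_dotProduct_add_Wfun_ne_zero (fun i => (e i : Idx b d) - x₀)
    (fun i i' h => e.injective (Subtype.ext (sub_left_inj.mp h)))
    (fun i => ⟨hdiff _ (hmem i).1 x₀ hx₀, (hmem i).2.2⟩)
    (fun i => (hI _ (hdiff _ (hmem i).1 x₀ hx₀) (sub_ne_zero.mpr (hmem i).2.1)).2.2)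
    (quadMonomials x₀.2)
  exact hi (Lfun_dotProduct_quadMonomials_add_Wfun (hT hx₀) (by simpa using hT (hmem i).1))

end

theorem AmbSet_eq_sumsOfAtMost : AmbSet p j = sumsOfAtMost (Gamma p j) (Bconst b d) := rfl

theorem card_le_of_sub_mem_AmbSet (hI : GenericI p j) (hII : GenericII p j)
    {T : Finset (Idx b d)} (hT : ↑T ⊆ Chars j) (hdiff : ∀ x ∈ T, ∀ y ∈ T, x - y ∈ AmbSet p j) :
    T.card ≤ Bprime d + b * b + 1 := by
  classical
  obtain rfl | ⟨x₀, hx₀⟩ := T.eq_empty_or_nonempty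
  · simp
  have hsplit := Finset.card_filter_add_card_filter_not (s := T.erase x₀)
    (fun x => x - x₀ ∈ DegSet j ∨ (x - x₀).2 = 0)
  have hdeg := card_degenerate_le hI hT hdiff hx₀
  have hnondeg := card_nondegenerate_lt hI hII hT hdiff hx₀
  have herase := Finset.card_erase_add_one hx₀
  omega

theorem neg_mem_Gamma {x : Idx b d} (hx : x ∈ Gamma p j) : -x ∈ Gamma p j := by
  obtain ⟨P, P', hP, h1, h2⟩ := hx
  refine ⟨P', P, by simpa [add_comm] using hP, ?_, ?_⟩
  · rw [Prod.fst_neg, h1]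
    funext k
    simp
  · rw [Prod.snd_neg, h2]
    funext m
    simp [← Finset.sum_neg_distrib, ← neg_mul]

theorem Bconst_lt (hb : 1 ≤ b) (hd : 1 ≤ d) : Bconst b d < 3 * (d ^ 2 + b ^ 2) := by
  have : (d + 1) * (d + 2) / 2 ≤ 3 * d ^ 2 := Nat.div_le_of_le_mul (by nlinarith)
  simp only [Bconst, Bprime]
  nlinarith

theorem connected_sets_on_characteristics_are_small_general
    {b d p : ℕ} (hb : 1 ≤ b) (hd : 1 ≤ d)
    (j : Fin b → Fin d → ℤ)
    (hI : GenericI p j) (hII : GenericII p j)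
    (S : Set (Idx b d)) (hS : S ⊆ Chars j)
    (hconn : ∀ x ∈ S, ∀ y ∈ S,
      Relation.ReflTransGen (fun u v => u ∈ S ∧ v ∈ S ∧ u ≠ v ∧ u - v ∈ Gamma p j) x y) :
    S.Finite ∧ S.ncard ≤ Bconst b d ∧ S.ncard < 3 * (d ^ 2 + b ^ 2) := by
  have hencard : S.encard ≤ Bconst b d := by
    by_contra! hlarge
    obtain ⟨x₀, hx₀⟩ := Set.nonempty_of_encard_ne_zero (pos_of_gt hlarge).ne'
    obtain ⟨T, hTS, -, hTcard, hTdiff⟩ := exists_finset_sub_mem_sumsOfAtMost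
      (fun _ => neg_mem_Gamma) (fun _ _ h => ⟨h.2.1, h.2.2.2⟩) hx₀ (hconn x₀ hx₀)
      (Bconst b d) (Order.add_one_le_of_lt hlarge)
    have := card_le_of_sub_mem_AmbSet hI hII (hTS.trans hS)
      (by simpa only [AmbSet_eq_sumsOfAtMost] using hTdiff)
    simp only [Bconst] at hTcard
    nlinarith
  obtain ⟨hfin, hncard⟩ := Set.encard_le_coe_iff_finite_ncard_le.mp hencard
  exact ⟨hfin, hncard, hncard.trans_lt (Bconst_lt hb hd)⟩

/-- Γ-connected subsets of the characteristics have size at most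
`B = (d+1)(d+2)/2 + b(b+1) < 3(d²+b²)`. -/
theorem connected_sets_on_characteristics_are_small
    {b d p : ℕ} (hb : 1 ≤ b) (hd : 1 ≤ d) (hp : 1 ≤ p)
    (j : Fin b → Fin d → ℤ) (hdist : Function.Injective j) (hnz : ∀ k, j k ≠ 0)
    (hI : GenericI p j) (hII : GenericII p j)
    (S : Set (Idx b d)) (hS : S ⊆ Chars j)
    (hconn : ∀ x ∈ S, ∀ y ∈ S,
      Relation.ReflTransGen (fun u v => u ∈ S ∧ v ∈ S ∧ u ≠ v ∧ u - v ∈ Gamma p j) x y) :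
    S.Finite ∧ S.ncard ≤ Bconst b d ∧ S.ncard < 3 * (d ^ 2 + b ^ 2) :=
  connected_sets_on_characteristics_are_small_general hb hd j hI hII S hS hconn

end NLW
end

section
/- Let b, d ≥ 1, ω ∈ ℝ^b, and let (Δn₀, Δj₀) ∈ ℝ^b × ℝ^d satisfy |Δj₀|² − (Δn₀·ω)² ≠ 0. Let (n, j) ∈ ℝ^b × ℝ^d satisfy ε(n·ω) + √(|j|²+1) = 0 for some sign ε ∈ {+1, −1}. Then there exist at most two distinct nonzero real numbers α (in particular, at most two distinct nonzero integers α) such that the translated point (n + αΔn₀, j + αΔj₀) also lies on the characteristics, i.e., such that ε_α((n + αΔn₀)·ω) + √(|j + αΔj₀|²+1) = 0 for some sign ε_α ∈ {+1, −1}. -/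
open scoped BigOperators

/-! Points on the characteristics satisfy `(n·ω)² = |j|² + 1`. Along the line
`α ↦ (n + αΔn₀, j + αΔj₀)` the difference `(n·ω)² - |j|² - 1` is a quadratic in `α` without
constant term whose leading coefficient `(Δn₀·ω)² - |Δj₀|²` is nonzero, so it has at most one nonzero root. -/

lemma sq_eq_of_sign_mul_add_sqrt_eq_zero {ε x y : ℝ} (hε : ε = 1 ∨ ε = -1) (hy : 0 ≤ y)
    (h : ε * x + Real.sqrt y = 0) : x ^ 2 = y := by
  have hsqrt : Real.sqrt y = -(ε * x) := by linarith
  have hsq := Real.sq_sqrt hy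
  rw [hsqrt] at hsq
  rcases hε with rfl | rfl <;> linear_combination hsq

lemma eq_neg_div_of_mul_sq_add_mul_eq_zero {a c α : ℝ} (ha : a ≠ 0) (hα : α ≠ 0)
    (h : a * α ^ 2 + c * α = 0) : α = -c / a := by
  rw [eq_div_iff ha]
  have : α * (a * α + c) = 0 := by linear_combination h
  linear_combination (mul_eq_zero.mp this).resolve_left hα

section LineSums

variable {ι : Type*} [Fintype ι]

lemma sum_add_mul_mul (x v w : ι → ℝ) (α : ℝ) :
    ∑ k, (x k + α * v k) * w k = ∑ k, x k * w k + α * ∑ k, v k * w k := by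
  simp only [add_mul, Finset.sum_add_distrib, Finset.mul_sum, mul_assoc]

lemma sum_add_mul_sq (x v : ι → ℝ) (α : ℝ) :
    ∑ m, (x m + α * v m) ^ 2
      = ∑ m, x m ^ 2 + 2 * α * ∑ m, x m * v m + α ^ 2 * ∑ m, v m ^ 2 := by
  simp only [Finset.mul_sum, ← Finset.sum_add_distrib]
  exact Finset.sum_congr rfl fun m _ => by ring

end LineSums

theorem at_most_two_nonzero_multiples_stay_on_characteristics_general
    {b d : ℕ}
    (ω Δn₀ : Fin b → ℝ) (Δj₀ : Fin d → ℝ)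
    (hne : (∑ m, (Δj₀ m)^2) - (∑ k, Δn₀ k * ω k)^2 ≠ 0)
    (n : Fin b → ℝ) (j : Fin d → ℝ) (ε : ℝ) (hε : ε = 1 ∨ ε = -1)
    (h : ε * (∑ k, n k * ω k) + Real.sqrt ((∑ m, (j m)^2) + 1) = 0) :
    ∃ α₁ α₂ : ℝ, ∀ α : ℝ, α ≠ 0 →
      (∃ εα : ℝ, (εα = 1 ∨ εα = -1) ∧
        εα * (∑ k, (n k + α * Δn₀ k) * ω k)
          + Real.sqrt ((∑ m, (j m + α * Δj₀ m)^2) + 1) = 0) →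
      α = α₁ ∨ α = α₂ := by
  set N := ∑ k, n k * ω k
  set A := ∑ k, Δn₀ k * ω k
  set B := ∑ m, j m * Δj₀ m
  set C := ∑ m, Δj₀ m ^ 2
  have hbase := sq_eq_of_sign_mul_add_sqrt_eq_zero hε (by positivity) h
  refine ⟨-(2 * (B - N * A)) / (C - A ^ 2), -(2 * (B - N * A)) / (C - A ^ 2),
    fun α hα ⟨εα, hεα, hchar⟩ => Or.inl (eq_neg_div_of_mul_sq_add_mul_eq_zero hne hα ?_)⟩
  have hline := sq_eq_of_sign_mul_add_sqrt_eq_zero hεα (by positivity) hchar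
  rw [sum_add_mul_mul, sum_add_mul_sq] at hline
  linear_combination hbase - hline

/-- in a degenerate direction (Δn₀, Δj₀) with |Δj₀|² − (Δn₀·ω)² ≠ 0, at most
two distinct nonzero multiples of the direction translate a point of the characteristics
back onto the characteristics. -/
theorem at_most_two_nonzero_multiples_stay_on_characteristics
    {b d : ℕ} (hb : 1 ≤ b) (hd : 1 ≤ d)
    (ω Δn₀ : Fin b → ℝ) (Δj₀ : Fin d → ℝ)
    (hne : (∑ m, (Δj₀ m)^2) - (∑ k, Δn₀ k * ω k)^2 ≠ 0)
    (n : Fin b → ℝ) (j : Fin d → ℝ) (ε : ℝ) (hε : ε = 1 ∨ ε = -1)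
    (h : ε * (∑ k, n k * ω k) + Real.sqrt ((∑ m, (j m)^2) + 1) = 0) :
    ∃ α₁ α₂ : ℝ, ∀ α : ℝ, α ≠ 0 →
      (∃ εα : ℝ, (εα = 1 ∨ εα = -1) ∧
        εα * (∑ k, (n k + α * Δn₀ k) * ω k)
          + Real.sqrt ((∑ m, (j m + α * Δj₀ m)^2) + 1) = 0) →
      α = α₁ ∨ α = α₂ :=
  at_most_two_nonzero_multiples_stay_on_characteristics_general ω Δn₀ Δj₀ hne n j ε hε h
end

section
/- Fix b ≥ 1, d ≥ 1 and pairwise distinct nonzero vectors j_1, …, j_b ∈ ℤ^d, and set ω⁰ = (√(|j_1|²+1), …, √(|j_b|²+1)) ∈ ℝ^b. There exist c' > 0 and q > b+1 such that for every n ∈ ℤ^b with n ≠ 0, every j ∈ ℤ^d and each sign ±: if ±n·ω⁰ + √(|j|²+1) ≠ 0, then |±n·ω⁰ + √(|j|²+1)| ≥ c' ‖n‖₁^{−q}. -/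
open scoped BigOperators

/-!
Let `α = ±n·ω⁰`: it is an algebraic integer of `K = ℚ(√a₁, …, √a_b) ⊂ ℝ`, `a_k = |j_k|² + 1`,
all of whose conjugates have modulus at most `C‖n‖₁`. Put `m = |j|² + 1`. If `|α + √m| < 1`, then `√m ≤ C‖n‖₁ + 1`, so
`y = α² - m = (α + √m)(α - √m)` is an algebraic integer of `K` whose conjugates are `O(‖n‖₁²)`,
and `y = 0` would force `α = √m`, hence `|α + √m| ≥ 2`. The norm of `y` is a nonzero integer and
the product of its conjugates, so `|y| ≳ ‖n‖₁^(-2([K:ℚ] - 1))`; with `|α - √m| ≲ ‖n‖₁` this gives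
`|α + √m| ≳ ‖n‖₁^(-(2[K:ℚ] - 1))`.
-/

theorem one_le_norm_mul_pow_of_isIntegral {K : Type*} [Field K] [Algebra ℚ K]
    [FiniteDimensional ℚ K] (τ : K →ₐ[ℚ] ℂ) {y : K} (hy : IsIntegral ℤ y) (hy0 : y ≠ 0)
    {M : ℝ} (hM : ∀ σ : K →ₐ[ℚ] ℂ, ‖σ y‖ ≤ M) :
    1 ≤ ‖τ y‖ * M ^ (Module.finrank ℚ K - 1) := by
  classical
  obtain ⟨z, hz⟩ := IsIntegrallyClosed.isIntegral_iff.mp (Algebra.isIntegral_norm ℚ hy)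
  have hz0 : z ≠ 0 := by
    rintro rfl
    exact hy0 (by simpa using hz.symm)
  have hcard : (Finset.univ.erase τ).card = Module.finrank ℚ K - 1 := by
    rw [Finset.card_erase_of_mem (Finset.mem_univ τ), Finset.card_univ, AlgHom.card]
  calc (1 : ℝ) ≤ ‖(z : ℂ)‖ := by
        rw [Complex.norm_intCast]; exact_mod_cast Int.one_le_abs hz0
    _ = ∏ σ : K →ₐ[ℚ] ℂ, ‖σ y‖ := by
        rw [← norm_prod, ← Algebra.norm_eq_prod_embeddings, ← hz]; simp
    _ = ‖τ y‖ * ∏ σ ∈ Finset.univ.erase τ, ‖σ y‖ :=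
        (Finset.mul_prod_erase _ _ (Finset.mem_univ τ)).symm
    _ ≤ ‖τ y‖ * M ^ (Module.finrank ℚ K - 1) := by
        refine mul_le_mul_of_nonneg_left ?_ (norm_nonneg _)
        rw [← hcard, ← Finset.prod_const]
        exact Finset.prod_le_prod (fun σ _ => norm_nonneg _) fun σ _ => hM σ

theorem norm_map_eq_sqrt_of_sq_eq_natCast {F G : Type*} [Ring F] [FunLike G F ℂ]
    [RingHomClass G F ℂ] (σ : G) {x : F} {N : ℕ} (hx : x ^ 2 = N) : ‖σ x‖ = √N := by
  rw [← Real.sqrt_sq (norm_nonneg _), ← norm_pow, ← map_pow, hx, map_natCast,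
    Complex.norm_natCast]

theorem isIntegral_of_sq_eq_natCast {R A : Type*} [CommRing R] [Ring A] [Algebra R A] {x : A}
    {N : ℕ} (hx : x ^ 2 = N) : IsIntegral R x :=
  IsIntegral.of_pow two_pos (hx ▸ isIntegral_natCast N)

section SqrtField

variable {ι : Type*} (a : ι → ℕ)

noncomputable def sqrtField : IntermediateField ℚ ℝ :=
  IntermediateField.adjoin ℚ (Set.range fun k => √(a k : ℝ))

namespace sqrtField

noncomputable def sqrt (k : ι) : sqrtField a :=
  ⟨√(a k), IntermediateField.subset_adjoin _ _ ⟨k, rfl⟩⟩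

theorem sqrt_sq (k : ι) : sqrt a k ^ 2 = a k :=
  Subtype.ext <| by simp [sqrt]

instance [Finite ι] : FiniteDimensional ℚ (sqrtField a) :=
  IntermediateField.finiteDimensional_adjoin fun _ ⟨k, hk⟩ =>
    hk ▸ isIntegral_of_sq_eq_natCast (Real.sq_sqrt (Nat.cast_nonneg (a k)))

theorem exists_isIntegral_norm_map_le [Fintype ι] (n : ι → ℤ) :
    ∃ s : sqrtField a, (s : ℝ) = ∑ k, n k * √(a k) ∧ IsIntegral ℤ s ∧
      ∀ σ : sqrtField a →ₐ[ℚ] ℂ, ‖σ s‖ ≤ ∑ k, |(n k : ℝ)| * √(a k) := by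
  refine ⟨∑ k, n k * sqrt a k, by simp [sqrt], ?_, fun σ => ?_⟩
  · exact IsIntegral.sum _ fun k _ =>
      (isIntegral_intCast (n k)).mul (isIntegral_of_sq_eq_natCast (sqrt_sq a k))
  · rw [map_sum]
    refine (norm_sum_le _ _).trans (Finset.sum_le_sum fun k _ => ?_)
    rw [map_mul, map_intCast, norm_mul, Complex.norm_intCast,
      norm_map_eq_sqrt_of_sq_eq_natCast σ (sqrt_sq a k)]

end sqrtField

end SqrtField

namespace IntermediateField

noncomputable def realEmbedding (K : IntermediateField ℚ ℝ) : K →ₐ[ℚ] ℂ :=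
  (Complex.ofRealAm.restrictScalars ℚ).comp K.val

@[simp]
theorem norm_realEmbedding (K : IntermediateField ℚ ℝ) (y : K) :
    ‖realEmbedding K y‖ = |(y : ℝ)| :=
  Complex.norm_real _

theorem one_le_abs_add_sqrt_mul {K : IntermediateField ℚ ℝ} [FiniteDimensional ℚ K] {α : K}
    (hα : IsIntegral ℤ α) {R : ℝ} (hR : 1 ≤ R) (hσ : ∀ σ : K →ₐ[ℚ] ℂ, ‖σ α‖ ≤ R) {m : ℕ}
    (hne : (α : ℝ) + √m ≠ 0) :
    1 ≤ |(α : ℝ) + √m| * (3 * R * (5 * R ^ 2) ^ (Module.finrank ℚ K - 1)) := by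
  set e := Module.finrank ℚ K - 1
  by_cases hbig : 1 ≤ |(α : ℝ) + √m|
  · refine hbig.trans (le_mul_of_one_le_right (abs_nonneg _) ?_)
    nlinarith [one_le_pow₀ (n := e) (by nlinarith : (1 : ℝ) ≤ 5 * R ^ 2)]
  push Not at hbig
  have hαR : |(α : ℝ)| ≤ R := by simpa using hσ (realEmbedding K)
  have hm_sq : (√m) ^ 2 = m := Real.sq_sqrt (Nat.cast_nonneg m)
  have hm : √m ≤ R + 1 := by linarith [abs_lt.1 hbig, abs_le.1 hαR]
  have hfac : (α : ℝ) ^ 2 - m = ((α : ℝ) + √m) * (α - √m) := by linear_combination hm_sq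
  have hy0 : α ^ 2 - m ≠ 0 := by
    intro h
    have hα_eq : (α : ℝ) = √m := by
      have h' : ((α : ℝ) + √m) * (α - √m) = 0 := by
        rw [← hfac]; exact_mod_cast congrArg Subtype.val h
      exact sub_eq_zero.1 ((mul_eq_zero.1 h').resolve_left hne)
    have hm0 : m ≠ 0 := by rintro rfl; simp_all
    have : 1 ≤ √m := Real.one_le_sqrt.2 (by exact_mod_cast Nat.one_le_iff_ne_zero.2 hm0)
    rw [hα_eq, abs_of_nonneg (by positivity)] at hbig
    linarith
  have hσy : ∀ σ : K →ₐ[ℚ] ℂ, ‖σ (α ^ 2 - m)‖ ≤ 5 * R ^ 2 := fun σ => by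
    have hσm : ‖(m : ℂ)‖ ≤ (R + 1) ^ 2 := by
      rw [Complex.norm_natCast, ← hm_sq]; gcongr
    calc ‖σ (α ^ 2 - m)‖ ≤ ‖σ α‖ ^ 2 + ‖(m : ℂ)‖ := by
          rw [map_sub, map_pow, map_natCast, ← norm_pow]; exact norm_sub_le _ _
      _ ≤ R ^ 2 + (R + 1) ^ 2 := by gcongr; exact hσ σ
      _ ≤ 5 * R ^ 2 := by nlinarith
  have hLiouville := one_le_norm_mul_pow_of_isIntegral (realEmbedding K)
    ((hα.pow 2).sub (isIntegral_natCast m)) hy0 hσy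
  rw [norm_realEmbedding] at hLiouville
  calc 1 ≤ |(α : ℝ) ^ 2 - m| * (5 * R ^ 2) ^ e := by simpa using hLiouville
    _ = |(α : ℝ) + √m| * |(α : ℝ) - √m| * (5 * R ^ 2) ^ e := by rw [hfac, abs_mul]
    _ ≤ |(α : ℝ) + √m| * (3 * R) * (5 * R ^ 2) ^ e := by
        gcongr
        rw [abs_le]
        constructor <;> linarith [abs_le.1 hαR, Real.sqrt_nonneg m]
    _ = _ := by ring

end IntermediateField

theorem one_le_sum_abs_of_ne_zero {ι : Type*} [Fintype ι] {n : ι → ℤ} (hn : n ≠ 0) :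
    1 ≤ ∑ k, |n k| := by
  obtain ⟨k, hk⟩ := Function.ne_iff.1 hn
  exact (Int.one_le_abs hk).trans (Finset.single_le_sum (fun i _ => abs_nonneg (n i))
    (Finset.mem_univ k))

theorem exists_pos_le_abs_sum_mul_sqrt_add_sqrt {ι : Type*} [Fintype ι] (a : ι → ℕ) :
    ∃ c : ℝ, 0 < c ∧ ∃ p : ℕ, ∀ n : ι → ℤ, n ≠ 0 → ∀ m : ℕ,
      ∑ k, n k * √(a k) + √m ≠ 0 →
      c * ((∑ k, |n k| : ℤ) : ℝ) ^ (-(p : ℝ)) ≤ |∑ k, n k * √(a k) + √m| := by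
  obtain ⟨C, hC, hsqrt_le⟩ : ∃ C : ℝ, 1 ≤ C ∧ ∀ k, √(a k) ≤ C :=
    ⟨∑ k, √(a k) + 1, le_add_of_nonneg_left (Finset.sum_nonneg fun k _ => Real.sqrt_nonneg _),
      fun k => (Finset.single_le_sum (fun i _ => Real.sqrt_nonneg (a i)) (Finset.mem_univ k)).trans
        (le_add_of_nonneg_right zero_le_one)⟩
  set e := Module.finrank ℚ (sqrtField a) - 1 with he
  refine ⟨(3 * C * (5 * C ^ 2) ^ e)⁻¹, by positivity, 2 * e + 1, fun n hn m hne => ?_⟩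
  set N : ℝ := ((∑ k, |n k| : ℤ) : ℝ)
  have hN : 1 ≤ N := by simp only [N]; exact_mod_cast one_le_sum_abs_of_ne_zero hn
  obtain ⟨s, hs, hs_int, hσs⟩ := sqrtField.exists_isIntegral_norm_map_le a n
  have hσ : ∀ σ : sqrtField a →ₐ[ℚ] ℂ, ‖σ s‖ ≤ C * N := fun σ => by
    refine (hσs σ).trans ?_
    calc ∑ k, |(n k : ℝ)| * √(a k) ≤ ∑ k, |(n k : ℝ)| * C :=
          Finset.sum_le_sum fun k _ => mul_le_mul_of_nonneg_left (hsqrt_le k) (abs_nonneg _)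
      _ = C * N := by simp [N, Finset.mul_sum, mul_comm]
  have h := IntermediateField.one_le_abs_add_sqrt_mul hs_int
    (one_le_mul_of_one_le_of_one_le hC hN) hσ (hs ▸ hne)
  rw [hs, ← he] at h
  rw [Real.rpow_neg (by positivity), Real.rpow_natCast, ← mul_inv,
    inv_le_iff_one_le_mul₀ (by positivity)]
  calc (1 : ℝ) ≤ _ := h
    _ = _ := by ring

namespace NLW

theorem sqnorm_add_one_eq_natCast {d : ℕ} (v : Fin d → ℤ) :
    sqnorm v + 1 = ((∑ m, (v m).natAbs ^ 2 + 1 : ℕ) : ℝ) := by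
  simp [sqnorm]

theorem diophantine_lower_bound_off_characteristics_general
    {b d : ℕ} (j : Fin b → Fin d → ℤ) :
    ∃ c' : ℝ, 0 < c' ∧ ∃ q : ℝ, (b : ℝ) + 1 < q ∧
      ∀ n : Fin b → ℤ, n ≠ 0 → ∀ jj : Fin d → ℤ, ∀ ε : ℝ, (ε = 1 ∨ ε = -1) →
        ε * dotP (omega0 j) n + Real.sqrt (sqnorm jj + 1) ≠ 0 →
        c' * (((∑ k, |n k| : ℤ) : ℝ) ^ (-q)) ≤
          |ε * dotP (omega0 j) n + Real.sqrt (sqnorm jj + 1)| := by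
  set a : Fin b → ℕ := fun k => ∑ m, (j k m).natAbs ^ 2 + 1
  have hω (n : Fin b → ℤ) : dotP (omega0 j) n = ∑ k, n k * √(a k : ℝ) := by
    simp only [dotP, omega0, sqnorm_add_one_eq_natCast, a]
  obtain ⟨c, hc, p, hbound⟩ := exists_pos_le_abs_sum_mul_sqrt_add_sqrt a
  refine ⟨c, hc, b + 2 + p, by linarith [Nat.cast_nonneg (α := ℝ) p], fun n hn jj ε hε hne => ?_⟩
  have hN : (1 : ℝ) ≤ ((∑ k, |n k| : ℤ) : ℝ) := by exact_mod_cast one_le_sum_abs_of_ne_zero hn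
  have hexp : c * ((∑ k, |n k| : ℤ) : ℝ) ^ (-((b : ℝ) + 2 + p)) ≤
      c * ((∑ k, |n k| : ℤ) : ℝ) ^ (-(p : ℝ)) := by
    gcongr
    linarith [Nat.cast_nonneg (α := ℝ) b]
  refine hexp.trans ?_
  rw [hω, sqnorm_add_one_eq_natCast] at hne ⊢
  rcases hε with rfl | rfl
  · rw [one_mul] at hne ⊢
    exact hbound n hn _ hne
  · have hneg : -1 * ∑ k, (n k : ℝ) * √(a k : ℝ) = ∑ k, ((-n) k : ℝ) * √(a k : ℝ) := by
      simp [Finset.sum_neg_distrib]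
    rw [hneg] at hne ⊢
    simpa using hbound (-n) (neg_ne_zero.2 hn) _ hne

/-- Diophantine (Schmidt-type) lower bound on the distance of ±n·ω⁰ + √(|j|²+1)
from zero, uniform in j ∈ ℤ^d, away from the characteristics. -/
theorem diophantine_lower_bound_off_characteristics
    {b d : ℕ} (hb : 1 ≤ b) (hd : 1 ≤ d)
    (j : Fin b → Fin d → ℤ) (hdist : Function.Injective j) (hnz : ∀ k, j k ≠ 0) :
    ∃ c' : ℝ, 0 < c' ∧ ∃ q : ℝ, (b : ℝ) + 1 < q ∧
      ∀ n : Fin b → ℤ, n ≠ 0 → ∀ jj : Fin d → ℤ, ∀ ε : ℝ, (ε = 1 ∨ ε = -1) →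
        ε * dotP (omega0 j) n + Real.sqrt (sqnorm jj + 1) ≠ 0 →
        c' * (((∑ k, |n k| : ℤ) : ℝ) ^ (-q)) ≤
          |ε * dotP (omega0 j) n + Real.sqrt (sqnorm jj + 1)| :=
  diophantine_lower_bound_off_characteristics_general j

end NLW
end
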